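/- Let ρ₀, ρ₁ be Borel probability measures on H with W₁(ρ₀,ρ₁) < ∞, and for each ε > 0 let Π_ε ∈ C(ρ₀,ρ₁) minimize Π ↦ ∫(|x−y| + ε α(x−y)) dΠ over C(ρ₀,ρ₁). If Π is a weak limit point of (Π_ε) as ε → 0, then Π ∈ O₁(ρ₀,ρ₁), i.e. ∫|x−y| dΠ ≤ ∫|x−y| dΠ₀ for every Π₀ ∈ C(ρ₀,ρ₁). -/

import Mathlib

open MeasureTheory ProbabilityTheory Filter Metric Set
open scoped ENNReal NNReal

section Defs

variable {E : Type*} [MeasurableSpace E]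

open scoped Classical in
/-- Relative entropy of `ρ` with respect to `m`: `∫ (dρ/dm) log(dρ/dm) dm`
when `ρ ≪ m` and the integrand is integrable, `+∞` otherwise. -/
noncomputable def Ent (m ρ : Measure E) : EReal :=
  if ρ ≪ m ∧ Integrable (llr ρ m) ρ then ((∫ x, llr ρ m x ∂ρ : ℝ) : EReal) else ⊤

end Defs

section Hilbert

variable {H : Type*} [NormedAddCommGroup H] [InnerProductSpace ℝ H]
  [MeasurableSpace H] [BorelSpace H]

/-- A centered Gaussian measure: every continuous linear functional pushes the measure
forward to a centered Gaussian measure on `ℝ`. -/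
def IsCenteredGaussian (γ : Measure H) : Prop :=
  IsProbabilityMeasure γ ∧
    ∀ ℓ : H →L[ℝ] ℝ, ∃ v : ℝ≥0, Measure.map ℓ γ = gaussianReal 0 v

/-- The covariance operator of `γ` has the representation `R x = ∑ i, c i ⟪x, e i⟫ e i` for an
orthonormal system `e` (expressed via `⟪R u, v⟫`), with eigenvalue decay `c (i+1) ≤ c i / i ^ α`
for some `α > 5/2`. -/
def TiserCondition (γ : Measure H) : Prop :=
  ∃ (a : ℝ) (c : ℕ → ℝ) (e : ℕ → H), 5 / 2 < a ∧ Orthonormal ℝ e ∧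
    (∀ i : ℕ, c (i + 1) ≤ c i / (i + 1 : ℝ) ^ a) ∧
    ∀ u v : H, ∫ x, (inner ℝ x u : ℝ) * (inner ℝ x v : ℝ) ∂γ
      = ∑' i, c i * (inner ℝ u (e i) : ℝ) * (inner ℝ v (e i) : ℝ)

/-- The set of couplings between `ρ₀` and `ρ₁`. -/
def Coupling (ρ₀ ρ₁ : Measure H) : Set (Measure (H × H)) :=
  {π | Measure.map Prod.fst π = ρ₀ ∧ Measure.map Prod.snd π = ρ₁}

/-- The transport cost `∫ |x - y| dπ`. -/
noncomputable def cost1 (π : Measure (H × H)) : ℝ≥0∞ :=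
  ∫⁻ p, ENNReal.ofReal ‖p.1 - p.2‖ ∂π

/-- The strictly convex cost `α(z) = √(1 + |z|²)`. -/
noncomputable def alphaCost (z : H) : ℝ := Real.sqrt (1 + ‖z‖ ^ 2)

/-- The gradient of `α`, `∇α(z) = z / √(1 + |z|²)`. -/
noncomputable def gradAlpha (z : H) : H := (Real.sqrt (1 + ‖z‖ ^ 2))⁻¹ • z

/-- The secondary transport cost `∫ α(x - y) dπ`. -/
noncomputable def cost2 (π : Measure (H × H)) : ℝ≥0∞ :=
  ∫⁻ p, ENNReal.ofReal (alphaCost (p.1 - p.2)) ∂π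

/-- The perturbed cost `∫ (|x-y| + ε α(x-y)) dπ`. -/
noncomputable def costEps (ε : ℝ) (π : Measure (H × H)) : ℝ≥0∞ :=
  ∫⁻ p, ENNReal.ofReal (‖p.1 - p.2‖ + ε * alphaCost (p.1 - p.2)) ∂π

/-- The 1-Wasserstein distance. -/
noncomputable def W1 (ρ₀ ρ₁ : Measure H) : ℝ≥0∞ :=
  ⨅ π ∈ Coupling ρ₀ ρ₁, cost1 π

/-- `W_ε(ρ₀,ρ₁) = inf ∫ c_ε(x-y) dπ` over couplings. -/
noncomputable def Weps (ε : ℝ) (ρ₀ ρ₁ : Measure H) : ℝ≥0∞ :=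
  ⨅ π ∈ Coupling ρ₀ ρ₁, costEps ε π

/-- The set of optimal couplings for `∫ |x-y| dπ`. -/
def O1 (ρ₀ ρ₁ : Measure H) : Set (Measure (H × H)) :=
  {π ∈ Coupling ρ₀ ρ₁ | ∀ π' ∈ Coupling ρ₀ ρ₁, cost1 π ≤ cost1 π'}

/-- The set of optimal couplings of the second variational problem. -/
def O2 (ρ₀ ρ₁ : Measure H) : Set (Measure (H × H)) :=
  {π ∈ O1 ρ₀ ρ₁ | ∀ π' ∈ O1 ρ₀ ρ₁, cost2 π ≤ cost2 π'}

/-- The displacement interpolation `ρ_t = ((1-t) P₁ + t P₂)_# π`. -/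
noncomputable def interp (t : ℝ) (π : Measure (H × H)) : Measure H :=
  Measure.map (fun p : H × H => (1 - t) • p.1 + t • p.2) π

/-- `π` enjoys the convexity property: the relative entropy is `1`-convex along
`t ↦ ((1-t)P₁ + tP₂)_#π`. -/
def ConvexityProperty (γ ρ₀ ρ₁ : Measure H) (π : Measure (H × H)) : Prop :=
  ∀ t ∈ Set.Ioo (0 : ℝ) 1,
    Ent γ (interp t π) ≤ ((1 - t : ℝ) : EReal) * Ent γ ρ₀ + ((t : ℝ) : EReal) * Ent γ ρ₁
      - ((ENNReal.ofReal (t * (1 - t) / 2) * (W1 ρ₀ ρ₁ * W1 ρ₀ ρ₁) : ℝ≥0∞) : EReal)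

/-- `O̅₂(ρ₀,ρ₁)`: elements of `O₂(ρ₀,ρ₁)` enjoying the convexity property. -/
def O2bar (γ ρ₀ ρ₁ : Measure H) : Set (Measure (H × H)) :=
  {π ∈ O2 ρ₀ ρ₁ | ConvexityProperty γ ρ₀ ρ₁ π}

/-- `x` is a Lebesgue point of `f` w.r.t. `γ`. -/
def IsLebesguePoint (γ : Measure H) (f : H → ℝ) (x : H) : Prop :=
  Tendsto (fun r : ℝ => (∫ y in ball x r, |f y - f x| ∂γ) / (γ (ball x r)).toReal)
    (nhdsWithin 0 (Set.Ioi 0)) (nhds 0)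

/-- Weak convergence of a sequence of measures (against bounded continuous functions). -/
def WeakLimit {X : Type*} [MeasurableSpace X] [TopologicalSpace X]
    (μs : ℕ → Measure X) (μ : Measure X) : Prop :=
  ∀ f : BoundedContinuousFunction X ℝ,
    Tendsto (fun n => ∫ x, f x ∂(μs n)) atTop (nhds (∫ x, f x ∂μ))

end Hilbert

variable {H : Type*} [NormedAddCommGroup H] [InnerProductSpace ℝ H] [CompleteSpace H]
  [TopologicalSpace.SeparableSpace H] [MeasurableSpace H] [BorelSpace H]

/-! The marginal maps are continuous, so the coupling constraint passes to weak limits. Against any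
coupling `π'`, minimality of `πe ε` and `α(z) ≤ 1 + |z|` give
`cost1 (πe ε) ≤ costEps ε π' ≤ ε + (1 + ε) cost1 π'`. By the portmanteau theorem the transport
cost, an integral of a nonnegative continuous function, is lower semicontinuous under weak
convergence, and letting `ε → 0` yields `cost1 π ≤ cost1 π'`. -/

lemma isProbabilityMeasure_of_mem_coupling {E : Type*} [MeasurableSpace E] {ρ₀ ρ₁ : Measure E}
    [IsProbabilityMeasure ρ₀] {π : Measure (E × E)} (hπ : π ∈ Coupling ρ₀ ρ₁) :
    IsProbabilityMeasure π := by
  have : IsProbabilityMeasure (π.map Prod.fst) := by rw [hπ.1]; infer_instance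
  exact Measure.isProbabilityMeasure_of_map Prod.fst

namespace WeakLimit

variable {X : Type*} [MeasurableSpace X] [TopologicalSpace X] {μs : ℕ → Measure X}
  {μ : Measure X} [∀ n, IsProbabilityMeasure (μs n)]

lemma isProbabilityMeasure (h : WeakLimit μs μ) : IsProbabilityMeasure μ := by
  have hlim := h (BoundedContinuousFunction.const X 1)
  simp only [BoundedContinuousFunction.const_apply', integral_const, probReal_univ,
    smul_eq_mul, mul_one, tendsto_const_nhds_iff] at hlim
  exact isProbabilityMeasure_iff_real.mpr hlim.symm

variable [OpensMeasurableSpace X]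

lemma tendsto_probabilityMeasure (h : WeakLimit μs μ) :
    Tendsto (fun n => ⟨μs n, inferInstance⟩ : ℕ → ProbabilityMeasure X) atTop
      (nhds (X := ProbabilityMeasure X) ⟨μ, h.isProbabilityMeasure⟩) :=
  ProbabilityMeasure.tendsto_iff_forall_integral_tendsto.mpr h

lemma map_eq {Y : Type*} [MeasurableSpace Y] [TopologicalSpace Y] [BorelSpace Y]
    [HasOuterApproxClosed Y] (h : WeakLimit μs μ) {φ : X → Y} (hφ : Continuous φ)
    {ν : Measure Y} (hν : ∀ n, (μs n).map φ = ν) : μ.map φ = ν := by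
  have : IsProbabilityMeasure ν := hν 0 ▸ Measure.isProbabilityMeasure_map hφ.aemeasurable
  have hmap := ProbabilityMeasure.tendsto_map_of_tendsto_of_continuous _ _
    h.tendsto_probabilityMeasure hφ
  have hconst : (fun n => ProbabilityMeasure.map ⟨μs n, inferInstance⟩ hφ.aemeasurable)
      = (fun _ => ⟨ν, inferInstance⟩ : ℕ → ProbabilityMeasure Y) := by
    funext n
    exact Subtype.ext (hν n)
  rw [hconst] at hmap
  exact congrArg Subtype.val <|
    tendsto_nhds_unique (X := ProbabilityMeasure Y) hmap tendsto_const_nhds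

lemma lintegral_le_liminf [HasOuterApproxClosed X] (h : WeakLimit μs μ) {f : X → ℝ}
    (hf : Continuous f) (hf₀ : 0 ≤ f) :
    ∫⁻ x, ENNReal.ofReal (f x) ∂μ ≤ atTop.liminf fun n => ∫⁻ x, ENNReal.ofReal (f x) ∂μs n :=
  lintegral_le_liminf_lintegral_of_forall_isOpen_measure_le_liminf_measure hf hf₀ fun _ hG =>
    ProbabilityMeasure.le_liminf_measure_open_of_tendsto h.tendsto_probabilityMeasure hG

end WeakLimit

section Costs

variable {E : Type*} [NormedAddCommGroup E]

lemma alphaCost_le_one_add_norm (z : E) : alphaCost z ≤ 1 + ‖z‖ :=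
  Real.sqrt_le_iff.mpr ⟨by positivity, by nlinarith [norm_nonneg z]⟩

variable [MeasurableSpace E] {ε : ℝ}

lemma cost1_le_costEps (hε : 0 ≤ ε) (π : Measure (E × E)) : cost1 π ≤ costEps ε π :=
  lintegral_mono fun _ => ENNReal.ofReal_le_ofReal <|
    le_add_of_nonneg_right (mul_nonneg hε (Real.sqrt_nonneg _))

lemma costEps_le_cost1 (hε : 0 ≤ ε) (π : Measure (E × E)) [IsProbabilityMeasure π] :
    costEps ε π ≤ ENNReal.ofReal ε + ENNReal.ofReal (1 + ε) * cost1 π := by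
  have hpt (z : E) : ‖z‖ + ε * alphaCost z ≤ ε + (1 + ε) * ‖z‖ := by
    nlinarith [alphaCost_le_one_add_norm z]
  calc costEps ε π
      ≤ ∫⁻ p, ENNReal.ofReal ε + ENNReal.ofReal (1 + ε) * ENNReal.ofReal ‖p.1 - p.2‖ ∂π := by
        refine lintegral_mono fun p => (ENNReal.ofReal_le_ofReal (hpt _)).trans ?_
        rw [← ENNReal.ofReal_mul (by linarith)]
        exact ENNReal.ofReal_add_le
    _ = ENNReal.ofReal ε + ENNReal.ofReal (1 + ε) * cost1 π := by
        rw [lintegral_add_left measurable_const, lintegral_const_mul' _ _ ENNReal.ofReal_ne_top]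
        simp [cost1]

end Costs

lemma tendsto_ofReal_add_ofReal_one_add_mul {ε : ℕ → ℝ} (hε : Tendsto ε atTop (nhds 0))
    (c : ℝ≥0∞) :
    Tendsto (fun n => ENNReal.ofReal (ε n) + ENNReal.ofReal (1 + ε n) * c) atTop (nhds c) := by
  have h₀ : Tendsto (fun n => ENNReal.ofReal (ε n)) atTop (nhds 0) := by
    simpa using ENNReal.tendsto_ofReal hε
  have h₁ : Tendsto (fun n => ENNReal.ofReal (1 + ε n)) atTop (nhds 1) := by
    simpa using ENNReal.tendsto_ofReal (tendsto_const_nhds (x := (1 : ℝ)) |>.add hε)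
  simpa using h₀.add (ENNReal.Tendsto.mul_const h₁ (Or.inl one_ne_zero))

theorem weak_limit_in_O1_general
    (ρ₀ ρ₁ : Measure H) [IsProbabilityMeasure ρ₀]
    (πe : ℝ → Measure (H × H))
    (hcpl : ∀ ε > (0 : ℝ), πe ε ∈ Coupling ρ₀ ρ₁)
    (hopt : ∀ ε > (0 : ℝ), ∀ π' ∈ Coupling ρ₀ ρ₁, costEps ε (πe ε) ≤ costEps ε π')
    (π : Measure (H × H)) (ε : ℕ → ℝ) (hεpos : ∀ n, 0 < ε n)
    (hε0 : Tendsto ε atTop (nhds 0))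
    (hlim : WeakLimit (fun n => πe (ε n)) π) :
    π ∈ O1 ρ₀ ρ₁ := by
  have : ∀ n, IsProbabilityMeasure (πe (ε n)) :=
    fun n => isProbabilityMeasure_of_mem_coupling (hcpl _ (hεpos n))
  refine ⟨⟨hlim.map_eq continuous_fst fun n => (hcpl _ (hεpos n)).1,
    hlim.map_eq continuous_snd fun n => (hcpl _ (hεpos n)).2⟩, fun π' hπ' => ?_⟩
  have := isProbabilityMeasure_of_mem_coupling hπ'
  calc cost1 π ≤ atTop.liminf fun n => cost1 (πe (ε n)) :=
        hlim.lintegral_le_liminf (continuous_fst.sub continuous_snd).norm fun _ => norm_nonneg _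
    _ ≤ atTop.liminf fun n => ENNReal.ofReal (ε n) + ENNReal.ofReal (1 + ε n) * cost1 π' :=
        liminf_le_liminf <| .of_forall fun n =>
          (cost1_le_costEps (hεpos n).le _).trans <|
            (hopt _ (hεpos n) π' hπ').trans (costEps_le_cost1 (hεpos n).le π')
    _ = cost1 π' := (tendsto_ofReal_add_ofReal_one_add_mul hε0 _).liminf_eq

/-- A weak limit point of minimizers of the perturbed problems `(P_ε)` as `ε → 0` belongs to
`O₁(ρ₀,ρ₁)`. -/
theorem weak_limit_in_O1
    (hinf : ¬ FiniteDimensional ℝ H)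
    (ρ₀ ρ₁ : Measure H) [IsProbabilityMeasure ρ₀] [IsProbabilityMeasure ρ₁]
    (hW : W1 ρ₀ ρ₁ ≠ ⊤)
    (πe : ℝ → Measure (H × H))
    (hcpl : ∀ ε > (0 : ℝ), πe ε ∈ Coupling ρ₀ ρ₁)
    (hopt : ∀ ε > (0 : ℝ), ∀ π' ∈ Coupling ρ₀ ρ₁, costEps ε (πe ε) ≤ costEps ε π')
    (π : Measure (H × H)) (ε : ℕ → ℝ) (hεpos : ∀ n, 0 < ε n)
    (hε0 : Tendsto ε atTop (nhds 0))
    (hlim : WeakLimit (fun n => πe (ε n)) π) :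
    π ∈ O1 ρ₀ ρ₁ :=
  weak_limit_in_O1_general ρ₀ ρ₁ πe hcpl hopt π ε hεpos hε0 hlim
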